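/- Let Λ ⊆ [0,1] satisfy the descending chain condition. Then the topological closure of Λ in ℝ also satisfies the descending chain condition. -/
import Mathlib

/-- A set `S ⊆ ℝ` satisfies the descending chain condition if it contains no
infinite strictly decreasing sequence. -/
def HasDCC (S : Set ℝ) : Prop := ¬ ∃ f : ℕ → ℝ, (∀ n, f n ∈ S) ∧ StrictAnti f

theorem dcc_closure (Λ : Set ℝ) (hΛ₀ : Λ ⊆ Set.Icc (0:ℝ) 1) (hΛ : HasDCC Λ) :
    HasDCC (closure Λ) := by
  rintro ⟨f, hf, hanti⟩
  apply hΛ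
  have key : ∀ n : ℕ, ∃ x ∈ Λ, x ∈ Set.Ioo (f (2*n+3)) (f (2*n+1)) := by
    intro n
    have h := hf (2*n+2)
    rw [mem_closure_iff] at h
    obtain ⟨x, hx1, hx2⟩ := h _ isOpen_Ioo ⟨hanti (show 2*n+2 < 2*n+3 by omega), hanti (show 2*n+1 < 2*n+2 by omega)⟩
    exact ⟨x, hx2, hx1⟩
  choose g hg1 hg2 using key
  refine ⟨g, hg1, strictAnti_nat_of_succ_lt fun n => ?_⟩
  calc g (n+1) < f (2*(n+1)+1) := (hg2 (n+1)).2
    _ ≤ f (2*n+3) := le_of_eq (by ring_nf)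
    _ < g n := (hg2 n).1
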